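/- There exists a universal constant C > 0 such that for all a ≥ 0 and all real k, |∫₀^∞ (e^{−iky} − 1) / (y^{3/2} + a^{3/2}) dy| ≤ C |k|^{1/2}. -/

import Mathlib

/-!
Since `‖e^{-iky} - 1‖ ≤ min(2, |k| y)`, dropping `a^{3/2}` from the denominator bounds the
integrand by `min(2, |k| y) y^{-3/2}`, uniformly in `a`. The substitution `u = |k| y` turns the
integral of this majorant into `|k|^{1/2} ∫₀^∞ min(2, u) u^{-3/2} du`, and that constant is finite
because the integrand behaves like `u^{-1/2}` near `0` and like `u^{-3/2}` near `∞`.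
-/

open MeasureTheory Set Complex

lemma norm_exp_neg_I_mul_sub_one_le (x : ℝ) : ‖exp (-(I * x)) - 1‖ ≤ min 2 |x| := by
  refine le_min ?_ ?_
  · calc ‖exp (-(I * x)) - 1‖ ≤ ‖exp (-(I * x))‖ + ‖(1 : ℂ)‖ := norm_sub_le _ _
      _ = 2 := by
        rw [show -(I * x) = ((-x : ℝ) : ℂ) * I by push_cast; ring, norm_exp_ofReal_mul_I]
        norm_num
  · simpa [← Real.norm_eq_abs] using Real.norm_exp_I_mul_ofReal_sub_one_le (x := -x)

lemma norm_exp_sub_one_div_rpow_add_le {a y : ℝ} (ha : 0 ≤ a) (hy : 0 < y) (k : ℝ) :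
    ‖(exp (-(I * k * y)) - 1) / ((y ^ (3 / 2 : ℝ) + a ^ (3 / 2 : ℝ) : ℝ) : ℂ)‖
      ≤ min 2 (|k| * y) * y ^ (-(3 / 2) : ℝ) := by
  have hnum := norm_exp_neg_I_mul_sub_one_le (k * y)
  rw [abs_mul, abs_of_pos hy] at hnum
  push_cast at hnum
  rw [norm_div, norm_real, Real.norm_of_nonneg (by positivity), Real.rpow_neg hy.le,
    ← div_eq_mul_inv, mul_assoc]
  exact div_le_div₀ (by positivity) hnum (by positivity) (le_add_of_nonneg_right (by positivity))

lemma integrableOn_min_mul_rpow {c K : ℝ} (hc : 0 ≤ c) (hK : 0 ≤ K) :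
    IntegrableOn (fun y : ℝ => min c (K * y) * y ^ (-(3 / 2) : ℝ)) (Ioi 0) := by
  set f := fun y : ℝ => min c (K * y) * y ^ (-(3 / 2) : ℝ)
  have hf : ∀ s ⊆ Ioi (0 : ℝ), MeasurableSet s → AEStronglyMeasurable f (volume.restrict s) :=
    fun s hs hsm => ContinuousOn.aestronglyMeasurable (by
      refine ((continuous_const.min (continuous_const.mul continuous_id)).continuousOn).mul
        (continuousOn_id.rpow_const fun y hy => Or.inl (hs hy).ne')) hsm
  rw [← Ioc_union_Ioi_eq_Ioi zero_le_one]
  refine IntegrableOn.union ?_ ?_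
  · have hbound : IntegrableOn (fun y : ℝ => K * y ^ (-(1 / 2) : ℝ)) (Ioc 0 1) := by
      refine Integrable.const_mul ?_ K
      exact (intervalIntegrable_iff_integrableOn_Ioc_of_le zero_le_one).1
        (intervalIntegral.intervalIntegrable_rpow' (by norm_num))
    refine hbound.mono' (hf _ Ioc_subset_Ioi_self measurableSet_Ioc) ?_
    filter_upwards [ae_restrict_mem measurableSet_Ioc] with y hy
    replace hy : 0 < y := hy.1
    rw [Real.norm_of_nonneg (by positivity)]
    calc min c (K * y) * y ^ (-(3 / 2) : ℝ) ≤ K * y * y ^ (-(3 / 2) : ℝ) := by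
          gcongr; exact min_le_right _ _
      _ = K * y ^ (-(1 / 2) : ℝ) := by
          rw [mul_assoc, ← Real.rpow_one_add' hy.le (by norm_num)]; norm_num
  · have hbound : IntegrableOn (fun y : ℝ => c * y ^ (-(3 / 2) : ℝ)) (Ioi 1) :=
      (integrableOn_Ioi_rpow_of_lt (by norm_num) zero_lt_one).const_mul c
    refine hbound.mono' (hf _ (Ioi_subset_Ioi zero_le_one) measurableSet_Ioi) ?_
    filter_upwards [ae_restrict_mem measurableSet_Ioi] with y hy
    have hy0 : 0 < y := zero_lt_one.trans hy
    rw [Real.norm_of_nonneg (by positivity)]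
    exact mul_le_mul_of_nonneg_right (min_le_left _ _) (by positivity)

lemma integral_min_mul_rpow_pos {c : ℝ} (hc : 0 < c) :
    0 < ∫ u in Ioi 0, min c u * u ^ (-(3 / 2) : ℝ) := by
  have hint := integrableOn_min_mul_rpow (K := 1) hc.le zero_le_one
  simp only [one_mul] at hint
  rw [setIntegral_pos_iff_support_of_nonneg_ae ?_ hint]
  · rw [inter_eq_right.2 fun u hu => ?_]
    · simp
    · exact (mul_pos (lt_min hc hu) (Real.rpow_pos_of_pos hu _)).ne'
  · filter_upwards [ae_restrict_mem measurableSet_Ioi] with u hu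
    exact (mul_pos (lt_min hc hu) (Real.rpow_pos_of_pos hu _)).le

lemma integral_min_mul_rpow_eq (c : ℝ) {K : ℝ} (hK : 0 < K) :
    ∫ y in Ioi 0, min c (K * y) * y ^ (-(3 / 2) : ℝ)
      = K ^ (1 / 2 : ℝ) * ∫ u in Ioi 0, min c u * u ^ (-(3 / 2) : ℝ) := by
  have hscale := integral_comp_mul_left_Ioi (fun u => min c u * u ^ (-(3 / 2) : ℝ)) 0 hK
  rw [mul_zero, smul_eq_mul] at hscale
  have hcongr : ∫ y in Ioi 0, min c (K * y) * (K * y) ^ (-(3 / 2) : ℝ)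
      = K ^ (-(3 / 2) : ℝ) * ∫ y in Ioi 0, min c (K * y) * y ^ (-(3 / 2) : ℝ) := by
    rw [← integral_const_mul]
    refine setIntegral_congr_fun measurableSet_Ioi fun y hy => ?_
    rw [Real.mul_rpow hK.le (le_of_lt hy)]
    ring
  rw [hcongr] at hscale
  set I := ∫ y in Ioi 0, min c (K * y) * y ^ (-(3 / 2) : ℝ)
  calc I = K ^ (3 / 2 : ℝ) * (K ^ (-(3 / 2) : ℝ) * I) := by
        rw [← mul_assoc, ← Real.rpow_add hK]; norm_num
    _ = K ^ (1 / 2 : ℝ) * ∫ u in Ioi 0, min c u * u ^ (-(3 / 2) : ℝ) := by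
        rw [hscale, ← mul_assoc, ← Real.rpow_neg_one, ← Real.rpow_add hK]; norm_num

/-- Uniform symbol bound: there is a universal `C > 0` such that for all `a ≥ 0`
and real `k`, `|∫₀^∞ (e^{−iky} − 1) / (y^{3/2} + a^{3/2}) dy| ≤ C |k|^{1/2}`. -/
theorem stmt10 :
    ∃ C > 0, ∀ a : ℝ, 0 ≤ a → ∀ k : ℝ,
      ‖∫ y in Set.Ioi (0:ℝ),
          (Complex.exp (-(Complex.I * (k:ℂ) * (y:ℂ))) - 1)
            / ((y ^ ((3:ℝ)/2) + a ^ ((3:ℝ)/2) : ℝ) : ℂ)‖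
        ≤ C * |k| ^ ((1:ℝ)/2) := by
  refine ⟨_, integral_min_mul_rpow_pos two_pos, fun a ha k => ?_⟩
  rcases eq_or_ne k 0 with rfl | hk
  · simp
  calc _ ≤ ∫ y in Ioi 0, min 2 (|k| * y) * y ^ (-(3 / 2) : ℝ) := by
        refine norm_integral_le_of_norm_le
          (integrableOn_min_mul_rpow zero_le_two (abs_nonneg k)) ?_
        filter_upwards [ae_restrict_mem measurableSet_Ioi] with y hy
        exact norm_exp_sub_one_div_rpow_add_le ha hy k
    _ = _ := by rw [integral_min_mul_rpow_eq 2 (abs_pos.2 hk), mul_comm]
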